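/- Let X ⊆ ℝⁿ be a nonempty closed convex set, f₁ : ℝⁿ → ℝ convex, f₂ : ℝⁿ → ℝ convex and differentiable with L-Lipschitz continuous gradient, and F = f₁ + f₂ with nonempty optimal solution set X* over X and optimal value F*. Assume the local error bound property holds. Suppose (x^r) ⊆ X is generated by an APS method with error constant κ > 0 and stepsizes 0 < α̲ ≤ α_r ≤ ᾱ, and the sufficient decrease condition F(x^r) − F(x^{r+1}) ≥ c₁‖x^{r+1} − x^r‖² holds for some c₁ > 0 and all r. Then the objective values converge Q-linearly to F*: there exist θ > 0 and an index R such that F(x^{r+1}) − F* ≤ θ·(F(x^r) − F(x^{r+1})), and hence F(x^{r+1}) − F* ≤ (θ/(1+θ))·(F(x^r) − F*), for all r ≥ R. -/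

import Mathlib

open Set

/-- `p` is the proximal point `prox_φ(x, X)`: the minimizer over `y ∈ X` of
`φ(y) + (1/2)‖y − x‖²`. -/
def IsProx {E : Type*} [NormedAddCommGroup E] [InnerProductSpace ℝ E]
    (φ : E → ℝ) (X : Set E) (x p : E) : Prop :=
  p ∈ X ∧ ∀ y ∈ X, φ p + (1 / 2) * ‖p - x‖ ^ 2 ≤ φ y + (1 / 2) * ‖y - x‖ ^ 2

/-!
Both proximal points satisfy the variational inequality `⟪x - p, y - p⟫ ≤ φ y - φ p` on `X`.
Comparing the inexact step `x (r + 1)` with the exact point `p (x r)` bounds the residual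
`‖x r - p (x r)‖` by a multiple of `‖x (r + 1) - x r‖`; testing the step against points of `X*`
and using the gradient inequality for `f₂` bounds `F (x (r + 1)) - F*` by a multiple of
`‖x (r + 1) - x r‖ * dist (x (r + 1), X*)`. Sufficient decrease makes `F (x r)` converge, so the
steps and hence the residuals tend to `0`. Once the residual is below the error-bound threshold,
`dist (x r, X*) = O(‖x (r + 1) - x r‖)`, whence
`F (x (r + 1)) - F* = O(‖x (r + 1) - x r‖²) = O(F (x r) - F (x (r + 1)))`.
-/

open RealInnerProductSpace Filter Topology

theorem le_one_add_div_mul_of_mul_sq_le {a b c s d : ℝ} (ha : 0 < a) (hb : 0 ≤ b) (hc : 0 ≤ c)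
    (hd : 0 ≤ d) (h : a * s ^ 2 ≤ b * s * d + c * d ^ 2) :
    s ≤ (1 + (b + c) / a) * d := by
  rcases le_or_gt s d with hsd | hds
  · calc s ≤ d := hsd
      _ ≤ (1 + (b + c) / a) * d :=
        le_mul_of_one_le_left hd (le_add_of_nonneg_right (by positivity))
  · have has : a * s ≤ (b + c) * d := by
      refine le_of_mul_le_mul_right ?_ (hd.trans_lt hds)
      nlinarith [mul_le_mul_of_nonneg_left hds.le (mul_nonneg hc hd)]
    calc s ≤ (b + c) / a * d := by rw [div_mul_eq_mul_div, le_div_iff₀ ha]; linarith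
      _ ≤ (1 + (b + c) / a) * d := by gcongr; linarith

section ProximalStep

variable {E : Type*} [NormedAddCommGroup E] [InnerProductSpace ℝ E]

theorem IsProx.inner_sub_le {φ : E → ℝ} {X : Set E} {x p y : E} (h : IsProx φ X x p)
    (hφ : ConvexOn ℝ univ φ) (hX : Convex ℝ X) (hy : y ∈ X) :
    ⟪x - p, y - p⟫ ≤ φ y - φ p := by
  have hsmall : ∀ t : ℝ, 0 < t → t < 1 →
      φ p - φ y - ⟪p - x, y - p⟫ ≤ t / 2 * ‖y - p‖ ^ 2 := by
    intro t ht₀ ht₁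
    have hmin := h.2 _ (hX.lineMap_mem h.1 hy ⟨ht₀.le, ht₁.le⟩)
    have hconv : φ (AffineMap.lineMap p y t) ≤ (1 - t) * φ p + t * φ y := by
      simpa only [AffineMap.lineMap_apply_module, smul_eq_mul] using
        hφ.2 (mem_univ p) (mem_univ y) (by linarith) ht₀.le (by ring)
    have hexpand : ‖AffineMap.lineMap p y t - x‖ ^ 2
        = ‖p - x‖ ^ 2 + 2 * t * ⟪p - x, y - p⟫ + t ^ 2 * ‖y - p‖ ^ 2 := by
      rw [AffineMap.lineMap_apply_module', show t • (y - p) + p - x = (p - x) + t • (y - p) by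
        abel, norm_add_sq_real, real_inner_smul_right, norm_smul, Real.norm_eq_abs, mul_pow,
        sq_abs]
      ring
    refine le_of_mul_le_mul_left ?_ ht₀
    linarith
  have hlim : Tendsto (fun t : ℝ => t / 2 * ‖y - p‖ ^ 2) (𝓝[>] 0) (𝓝 0) := by
    have : Continuous fun t : ℝ => t / 2 * ‖y - p‖ ^ 2 := by fun_prop
    simpa using (this.tendsto 0).mono_left nhdsWithin_le_nhds
  have : φ p - φ y - ⟪p - x, y - p⟫ ≤ 0 := ge_of_tendsto hlim <| by
    filter_upwards [Ioo_mem_nhdsGT zero_lt_one] with t ht using hsmall t ht.1 ht.2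
  have hsymm : ⟪x - p, y - p⟫ = -⟪p - x, y - p⟫ := by rw [← inner_neg_left, neg_sub]
  linarith

theorem ConvexOn.inner_gradient_le [CompleteSpace E] {f : E → ℝ} (hf : ConvexOn ℝ univ f) {G z : E}
    (hG : HasGradientAt f G z) (y : E) : ⟪G, y - z⟫ ≤ f y - f z := by
  have hline : ConvexOn ℝ univ (f ∘ AffineMap.lineMap (k := ℝ) z y) := hf.comp_affineMap _
  have hderiv : HasDerivAt (f ∘ AffineMap.lineMap (k := ℝ) z y) ⟪G, y - z⟫ 0 := by
    have hG' : HasFDerivAt f (InnerProductSpace.toDual ℝ E G) (AffineMap.lineMap z y (0 : ℝ)) := by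
      simpa using hG.hasFDerivAt
    simpa using hG'.comp_hasDerivAt (0 : ℝ) AffineMap.hasDerivAt_lineMap
  simpa [slope_def_field] using
    hline.le_slope_of_hasDerivAt (mem_univ 0) (mem_univ 1) zero_lt_one hderiv

variable {φ : E → ℝ} {X : Set E} {z z' G e : E} {α κ : ℝ}

theorem norm_sub_prox_le_of_inexact_prox_step {q : E} (hφ : ConvexOn ℝ univ φ)
    (hX : Convex ℝ X) (hα : 0 < α) (hκ : 0 ≤ κ) (hq : IsProx φ X (z - G) q)
    (hz' : IsProx (fun y => α * φ y) X (z - α • (G + e)) z') (he : ‖e‖ ≤ κ * ‖z' - z‖) :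
    ‖z - q‖ ≤ (2 + 2 * κ + α⁻¹) * ‖z' - z‖ := by
  have hαφ : ConvexOn ℝ univ fun y => α * φ y := by simpa only [smul_eq_mul] using hφ.smul hα.le
  have h₁ := hq.inner_sub_le hφ hX hz'.1
  have h₂ := hz'.inner_sub_le hαφ hX hq.1
  rw [show z - G - q = -((q - z) + G) by abel, show z' - q = (z' - z) - (q - z) by abel] at h₁
  rw [show z - α • (G + e) - z' = -((z' - z) + α • (G + e)) by abel,
    show q - z' = (q - z) - (z' - z) by abel] at h₂
  set S := q - z
  set D := z' - z
  have hvi : α * ‖S‖ ^ 2 + ‖D‖ ^ 2 ≤ (1 + α) * ⟪S, D⟫ + α * ⟪e, S - D⟫ := by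
    simp only [inner_neg_left, inner_add_left, inner_sub_right, real_inner_smul_left,
      real_inner_self_eq_norm_sq, real_inner_comm D S] at h₁ h₂ ⊢
    -- in `α • h₁ + h₂` the gradient `G` cancels
    linarith [mul_le_mul_of_nonneg_left h₁ hα.le]
  have hSD : ⟪S, D⟫ ≤ ‖S‖ * ‖D‖ := real_inner_le_norm S D
  have heSD : ⟪e, S - D⟫ ≤ κ * ‖D‖ * (‖S‖ + ‖D‖) := calc
    ⟪e, S - D⟫ ≤ ‖e‖ * ‖S - D‖ := real_inner_le_norm e _
    _ ≤ κ * ‖D‖ * (‖S‖ + ‖D‖) := by gcongr; exact norm_sub_le S D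
  have hquad : α * ‖S‖ ^ 2 ≤ (1 + α + α * κ) * ‖S‖ * ‖D‖ + α * κ * ‖D‖ ^ 2 := by
    linarith [mul_le_mul_of_nonneg_left hSD (by linarith : (0 : ℝ) ≤ 1 + α),
      mul_le_mul_of_nonneg_left heSD hα.le, sq_nonneg ‖D‖]
  rw [norm_sub_rev]
  calc ‖S‖ ≤ (1 + ((1 + α + α * κ) + α * κ) / α) * ‖D‖ :=
        le_one_add_div_mul_of_mul_sq_le hα (by positivity) (by positivity) (norm_nonneg D) hquad
    _ = (2 + 2 * κ + α⁻¹) * ‖D‖ := by field_simp; ring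

theorem objective_sub_le_of_inexact_prox_step [CompleteSpace E] {f₂ : E → ℝ} {G' y : E} {L : ℝ}
    (hφ : ConvexOn ℝ univ φ) (hf₂ : ConvexOn ℝ univ f₂) (hX : Convex ℝ X) (hα : 0 < α)
    (hG' : HasGradientAt f₂ G' z') (hLip : ‖G - G'‖ ≤ L * ‖z - z'‖)
    (hz' : IsProx (fun y => α * φ y) X (z - α • (G + e)) z') (he : ‖e‖ ≤ κ * ‖z' - z‖)
    (hy : y ∈ X) :
    φ z' + f₂ z' - (φ y + f₂ y) ≤ (α⁻¹ + L + κ) * ‖z' - z‖ * ‖z' - y‖ := by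
  have hαφ : ConvexOn ℝ univ fun y => α * φ y := by simpa only [smul_eq_mul] using hφ.smul hα.le
  have h₁ := hz'.inner_sub_le hαφ hX hy
  have h₂ := hf₂.inner_gradient_le hG' y
  rw [show z - α • (G + e) - z' = -(z' - z) - α • (G + e) by abel] at h₁
  rw [norm_sub_rev z' y]
  rw [norm_sub_rev z z'] at hLip
  set D := z' - z
  set W := y - z'
  have hDW : ⟪D, W⟫ ≤ ‖D‖ * ‖W‖ := real_inner_le_norm D W
  have hGW : ⟪G - G', W⟫ ≤ L * ‖D‖ * ‖W‖ :=
    (real_inner_le_norm _ W).trans (by gcongr)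
  have heW : ⟪e, W⟫ ≤ κ * ‖D‖ * ‖W‖ := (real_inner_le_norm e W).trans (by gcongr)
  refine le_of_mul_le_mul_left ?_ hα
  rw [show α * ((α⁻¹ + L + κ) * ‖D‖ * ‖W‖)
      = ‖D‖ * ‖W‖ + α * (L * ‖D‖ * ‖W‖) + α * (κ * ‖D‖ * ‖W‖) by field_simp]
  simp only [inner_sub_left, inner_neg_left, inner_add_left, real_inner_smul_left] at h₁ hGW
  linarith [mul_le_mul_of_nonneg_left h₂ hα.le, mul_le_mul_of_nonneg_left hGW hα.le,
    mul_le_mul_of_nonneg_left heW hα.le]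

end ProximalStep

theorem Metric.le_mul_infDist {α : Type*} [PseudoMetricSpace α] {s : Set α} {x : α} {a c : ℝ}
    (hs : s.Nonempty) (ha : 0 ≤ a) (h : ∀ y ∈ s, c ≤ a * dist x y) : c ≤ a * infDist x s := by
  have := hs.to_subtype
  rw [infDist_eq_iInf, Real.mul_iInf_of_nonneg ha]
  exact le_ciInf fun y => h y y.2

theorem tendsto_sub_succ_of_antitone {a : ℕ → ℝ} (ha : Antitone a) (hbdd : BddBelow (range a)) :
    Tendsto (fun r => a r - a (r + 1)) atTop (𝓝 0) := by
  have h := tendsto_atTop_ciInf ha hbdd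
  simpa using h.sub (h.comp (tendsto_add_atTop_nat 1))

theorem exists_qlinear_of_sufficient_decrease {a d s ρ : ℕ → ℝ} {m c C K δ τ : ℝ}
    (hc : 0 < c) (hC : 0 ≤ C) (hK : 0 < K) (hδ : 0 < δ) (hτ : 0 ≤ τ) (hd : ∀ r, 0 ≤ d r)
    (hlow : ∀ r, m ≤ a r) (hdec : ∀ r, c * d r ^ 2 ≤ a r - a (r + 1))
    (hres : ∀ r, s r ≤ C * d r) (hEB : ∀ r, a r ≤ a 0 → s r ≤ δ → ρ r ≤ τ * s r)
    (hgap : ∀ r, a (r + 1) - m ≤ K * d r * (d r + ρ r)) :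
    ∃ θ > 0, ∃ R : ℕ, ∀ r, R ≤ r →
      a (r + 1) - m ≤ θ * (a r - a (r + 1)) ∧ a (r + 1) - m ≤ θ / (1 + θ) * (a r - m) := by
  have hanti : Antitone a := antitone_nat_of_succ_le fun r => by
    nlinarith [hdec r, mul_nonneg hc.le (sq_nonneg (d r))]
  have hsq : Tendsto (fun r => d r ^ 2) atTop (𝓝 0) := by
    have := (tendsto_sub_succ_of_antitone hanti ⟨m, forall_mem_range.2 hlow⟩).div_const c
    refine squeeze_zero (fun r => sq_nonneg _) (fun r => ?_) (by simpa using this)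
    rw [le_div_iff₀ hc, mul_comm]
    exact hdec r
  have hd0 : Tendsto d atTop (𝓝 0) := by
    simpa [Function.comp_def, fun r => Real.sqrt_sq (hd r)] using
      (Real.continuous_sqrt.tendsto 0).comp hsq
  obtain ⟨R, hR⟩ := eventually_atTop.1 ((hd0.const_mul C).eventually (ge_mem_nhds
    (show C * 0 < δ by rwa [mul_zero])))
  set θ := K * (1 + τ * C) / c
  refine ⟨θ, by positivity, R, fun r hr => ?_⟩
  have hρ : ρ r ≤ τ * C * d r := calc
    ρ r ≤ τ * s r := hEB r (hanti (Nat.zero_le r)) ((hres r).trans (hR r hr))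
    _ ≤ τ * C * d r := by rw [mul_assoc]; exact mul_le_mul_of_nonneg_left (hres r) hτ
  have hlin : a (r + 1) - m ≤ θ * (a r - a (r + 1)) := calc
    a (r + 1) - m ≤ K * d r * (d r + ρ r) := hgap r
    _ ≤ K * d r * ((1 + τ * C) * d r) := by
      have := hd r
      gcongr
      linarith
    _ = θ * (c * d r ^ 2) := by simp only [θ]; field_simp
    _ ≤ θ * (a r - a (r + 1)) := by gcongr; exact hdec r
  refine ⟨hlin, ?_⟩
  rw [div_mul_eq_mul_div, le_div_iff₀ (by positivity)]
  linarith

theorem aps_qlinear_objective_general {n : ℕ}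
    (X : Set (EuclideanSpace ℝ (Fin n)))
    (hXcv : Convex ℝ X)
    (f₁ f₂ : EuclideanSpace ℝ (Fin n) → ℝ)
    (hf₁ : ConvexOn ℝ univ f₁) (hf₂ : ConvexOn ℝ univ f₂)
    (g : EuclideanSpace ℝ (Fin n) → EuclideanSpace ℝ (Fin n))
    (hg : ∀ z, HasGradientAt f₂ (g z) z)
    (L : ℝ) (hL : 0 ≤ L) (hLip : ∀ z w, ‖g z - g w‖ ≤ L * ‖z - w‖)
    (F : EuclideanSpace ℝ (Fin n) → ℝ) (hF : ∀ z, F z = f₁ z + f₂ z)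
    (Xstar : Set (EuclideanSpace ℝ (Fin n)))
    (hXstar : Xstar = {y | y ∈ X ∧ ∀ z ∈ X, F y ≤ F z})
    (hXstarne : Xstar.Nonempty)
    (Fstar : ℝ) (hFstar : ∀ y ∈ Xstar, F y = Fstar)
    -- the residual map `p z = prox_{f₁}(z − ∇f₂(z))`
    (p : EuclideanSpace ℝ (Fin n) → EuclideanSpace ℝ (Fin n))
    (hp : ∀ z, IsProx f₁ X (z - g z) (p z))
    -- local error bound property
    (hEB : ∀ ν : ℝ, sInf (F '' X) ≤ ν → ∃ δ > (0 : ℝ), ∃ τ > (0 : ℝ),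
      ∀ z ∈ X, F z ≤ ν → ‖z - p z‖ ≤ δ →
        Metric.infDist z (closure Xstar) ≤ τ * ‖z - p z‖)
    (κ : ℝ) (hκ : 0 < κ)
    (α : ℕ → ℝ) (αlo : ℝ) (hαlo : 0 < αlo)
    (hα₁ : ∀ r, αlo ≤ α r)
    (x e : ℕ → EuclideanSpace ℝ (Fin n)) (hxX : ∀ r, x r ∈ X)
    (hAPS : ∀ r, IsProx (fun y => α r * f₁ y) X
      (x r - α r • (g (x r) + e r)) (x (r + 1)))
    (herr : ∀ r, ‖e r‖ ≤ κ * ‖x (r + 1) - x r‖)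
    (c₁ : ℝ) (hc₁ : 0 < c₁)
    (hdec : ∀ r, F (x r) - F (x (r + 1)) ≥ c₁ * ‖x (r + 1) - x r‖ ^ 2) :
    ∃ θ > (0 : ℝ), ∃ R : ℕ, ∀ r, R ≤ r →
      F (x (r + 1)) - Fstar ≤ θ * (F (x r) - F (x (r + 1))) ∧
      F (x (r + 1)) - Fstar ≤ θ / (1 + θ) * (F (x r) - Fstar) := by
  have hαpos : ∀ r, 0 < α r := fun r => hαlo.trans_le (hα₁ r)
  have hαlo_inv : 0 < αlo⁻¹ := inv_pos.2 hαlo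
  have hXstarX : Xstar ⊆ X := by rw [hXstar]; exact fun y hy => hy.1
  have hlow : ∀ z ∈ X, Fstar ≤ F z := by
    obtain ⟨y, hy⟩ := hXstarne
    rw [← hFstar y hy]
    exact (hXstar ▸ hy).2
  obtain ⟨δ, hδ, τ, hτ, hEB₀⟩ := hEB (F (x 0))
    (csInf_le ⟨Fstar, forall_mem_image.2 hlow⟩ (mem_image_of_mem F (hxX 0)))
  refine exists_qlinear_of_sufficient_decrease (a := fun r => F (x r))
    (s := fun r => ‖x r - p (x r)‖) (ρ := fun r => Metric.infDist (x r) Xstar)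
    (C := 2 + 2 * κ + αlo⁻¹) (K := αlo⁻¹ + L + κ) hc₁ (by positivity) (by linarith) hδ hτ.le
    (fun r => norm_nonneg _) (fun r => hlow _ (hxX r)) hdec (fun r => ?_)
    (fun r hr hs => ?_) (fun r => ?_)
  · refine (norm_sub_prox_le_of_inexact_prox_step hf₁ hXcv (hαpos r) hκ.le (hp (x r)) (hAPS r)
      (herr r)).trans ?_
    gcongr
    exact hα₁ r
  · rw [← Metric.infDist_closure]
    exact hEB₀ _ (hxX r) hr hs
  · have hstep : ∀ y ∈ Xstar,
        F (x (r + 1)) - Fstar ≤ (αlo⁻¹ + L + κ) * ‖x (r + 1) - x r‖ * dist (x (r + 1)) y := by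
      intro y hy
      rw [← hFstar y hy, hF, hF, dist_eq_norm]
      refine (objective_sub_le_of_inexact_prox_step hf₁ hf₂ hXcv (hαpos r) (hg _) (hLip _ _)
        (hAPS r) (herr r) (hXstarX hy)).trans ?_
      gcongr
      exact hα₁ r
    refine (Metric.le_mul_infDist hXstarne (by positivity) hstep).trans ?_
    gcongr
    exact Metric.infDist_le_infDist_add_dist.trans_eq (by rw [dist_eq_norm, add_comm])

/-- Q-linear convergence of the objective values of APS methods under the local error
bound property and the sufficient decrease condition.  Here `p z = prox_{f₁}(z − ∇f₂(z))`,
so that the residual is `ψ(z) = ‖z − p z‖`. -/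
theorem aps_qlinear_objective {n : ℕ}
    (X : Set (EuclideanSpace ℝ (Fin n)))
    (hXne : X.Nonempty) (hXcl : IsClosed X) (hXcv : Convex ℝ X)
    (f₁ f₂ : EuclideanSpace ℝ (Fin n) → ℝ)
    (hf₁ : ConvexOn ℝ univ f₁) (hf₂ : ConvexOn ℝ univ f₂)
    (g : EuclideanSpace ℝ (Fin n) → EuclideanSpace ℝ (Fin n))
    (hg : ∀ z, HasGradientAt f₂ (g z) z)
    (L : ℝ) (hL : 0 ≤ L) (hLip : ∀ z w, ‖g z - g w‖ ≤ L * ‖z - w‖)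
    (F : EuclideanSpace ℝ (Fin n) → ℝ) (hF : ∀ z, F z = f₁ z + f₂ z)
    (Xstar : Set (EuclideanSpace ℝ (Fin n)))
    (hXstar : Xstar = {y | y ∈ X ∧ ∀ z ∈ X, F y ≤ F z})
    (hXstarne : Xstar.Nonempty)
    (Fstar : ℝ) (hFstar : ∀ y ∈ Xstar, F y = Fstar)
    -- the residual map `p z = prox_{f₁}(z − ∇f₂(z))`
    (p : EuclideanSpace ℝ (Fin n) → EuclideanSpace ℝ (Fin n))
    (hp : ∀ z, IsProx f₁ X (z - g z) (p z))
    -- local error bound property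
    (hEB : ∀ ν : ℝ, sInf (F '' X) ≤ ν → ∃ δ > (0 : ℝ), ∃ τ > (0 : ℝ),
      ∀ z ∈ X, F z ≤ ν → ‖z - p z‖ ≤ δ →
        Metric.infDist z (closure Xstar) ≤ τ * ‖z - p z‖)
    (κ : ℝ) (hκ : 0 < κ)
    (α : ℕ → ℝ) (αlo αhi : ℝ) (hαlo : 0 < αlo)
    (hα₁ : ∀ r, αlo ≤ α r) (hα₂ : ∀ r, α r ≤ αhi)
    (x e : ℕ → EuclideanSpace ℝ (Fin n)) (hxX : ∀ r, x r ∈ X)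
    (hAPS : ∀ r, IsProx (fun y => α r * f₁ y) X
      (x r - α r • (g (x r) + e r)) (x (r + 1)))
    (herr : ∀ r, ‖e r‖ ≤ κ * ‖x (r + 1) - x r‖)
    (c₁ : ℝ) (hc₁ : 0 < c₁)
    (hdec : ∀ r, F (x r) - F (x (r + 1)) ≥ c₁ * ‖x (r + 1) - x r‖ ^ 2) :
    ∃ θ > (0 : ℝ), ∃ R : ℕ, ∀ r, R ≤ r →
      F (x (r + 1)) - Fstar ≤ θ * (F (x r) - F (x (r + 1))) ∧
      F (x (r + 1)) - Fstar ≤ θ / (1 + θ) * (F (x r) - Fstar) :=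
  aps_qlinear_objective_general X hXcv f₁ f₂ hf₁ hf₂ g hg L hL hLip F hF Xstar hXstar hXstarne Fstar
    hFstar p hp hEB κ hκ α αlo hαlo hα₁ x e hxX hAPS herr c₁ hc₁ hdec
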